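/- arXiv:1510.03991 — 6 statements merged into one kernel-verified Lean document; each statement's English description precedes it below -/
import Mathlib

section
/- Let F be a Frobenius category. Given a commutative square with left edge an inflation i : A → B, right edge a deflation p : X → Y whose kernel is injective, top edge f : A → X and bottom edge g : B → Y (so p∘f = g∘i), there exists a lift h : B → X with h∘i = f and p∘h = g. -/
open CategoryTheory CategoryTheory.Limits

universe v u

variable (C : Type u) [Category.{v} C] [Preadditive C] [HasZeroObject C] [HasBinaryBiproducts C]

/-- A Quillen exact structure on an additive category: a class of conflations
(kernel-cokernel pairs) satisfying the axioms of an exact category. -/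
structure ExactStructure where
  /-- the class of conflations -/
  IsConflation : ∀ ⦃X Y Z : C⦄, (X ⟶ Y) → (Y ⟶ Z) → Prop
  comp_zero : ∀ {X Y Z : C} {i : X ⟶ Y} {d : Y ⟶ Z}, IsConflation i d → i ≫ d = 0
  isKernel : ∀ {X Y Z : C} {i : X ⟶ Y} {d : Y ⟶ Z} (h : IsConflation i d),
    Nonempty (IsLimit (KernelFork.ofι i (comp_zero h)))
  isCokernel : ∀ {X Y Z : C} {i : X ⟶ Y} {d : Y ⟶ Z} (h : IsConflation i d),
    Nonempty (IsColimit (CokernelCofork.ofπ d (comp_zero h)))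
  split_conflation : ∀ X Y : C, IsConflation (biprod.inl : X ⟶ X ⊞ Y) (biprod.snd : X ⊞ Y ⟶ Y)
  iso_closed : ∀ {X Y Z X' Y' Z' : C} {i : X ⟶ Y} {d : Y ⟶ Z}
    (eX : X ≅ X') (eY : Y ≅ Y') (eZ : Z ≅ Z') (i' : X' ⟶ Y') (d' : Y' ⟶ Z'),
    IsConflation i d → eX.hom ≫ i' = i ≫ eY.hom → eY.hom ≫ d' = d ≫ eZ.hom →
    IsConflation i' d'
  infl_comp : ∀ {X Y Z : C} {i : X ⟶ Y} {j : Y ⟶ Z},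
    (∃ (W : C) (d : Y ⟶ W), IsConflation i d) → (∃ (W : C) (d : Z ⟶ W), IsConflation j d) →
    ∃ (W : C) (d : Z ⟶ W), IsConflation (i ≫ j) d
  defl_comp : ∀ {X Y Z : C} {p : X ⟶ Y} {q : Y ⟶ Z},
    (∃ (W : C) (k : W ⟶ X), IsConflation k p) → (∃ (W : C) (k : W ⟶ Y), IsConflation k q) →
    ∃ (W : C) (k : W ⟶ X), IsConflation k (p ≫ q)
  infl_pushout : ∀ {X Y Z : C} {i : X ⟶ Y}, (∃ (W : C) (d : Y ⟶ W), IsConflation i d) →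
    ∀ (f : X ⟶ Z), ∃ (W : C) (i' : Z ⟶ W) (f' : Y ⟶ W),
      (∃ (V : C) (d : W ⟶ V), IsConflation i' d) ∧ IsPushout f i i' f'
  defl_pullback : ∀ {X Y Z : C} {p : X ⟶ Y}, (∃ (W : C) (k : W ⟶ X), IsConflation k p) →
    ∀ (f : Z ⟶ Y), ∃ (W : C) (p' : W ⟶ Z) (f' : W ⟶ X),
      (∃ (V : C) (k : V ⟶ W), IsConflation k p') ∧ IsPullback f' p' p f

namespace ExactStructure

variable {C}
variable (E : ExactStructure C)

/-- admissible monomorphisms -/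
def IsInflation {X Y : C} (i : X ⟶ Y) : Prop := ∃ (Z : C) (d : Y ⟶ Z), E.IsConflation i d

/-- admissible epimorphisms -/
def IsDeflation {X Y : C} (d : X ⟶ Y) : Prop := ∃ (W : C) (i : W ⟶ X), E.IsConflation i d

/-- injective objects relative to the exact structure -/
def Inj (I : C) : Prop :=
  ∀ ⦃X Y : C⦄ (i : X ⟶ Y), E.IsInflation i → ∀ f : X ⟶ I, ∃ g : Y ⟶ I, i ≫ g = f

/-- projective objects relative to the exact structure -/
def Proj (P : C) : Prop :=
  ∀ ⦃X Y : C⦄ (d : X ⟶ Y), E.IsDeflation d → ∀ f : P ⟶ Y, ∃ g : P ⟶ X, g ≫ d = f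

end ExactStructure

/-- A Frobenius structure: an exact structure with enough injectives and projectives,
where the projectives coincide with the injectives. -/
structure FrobeniusStructure extends ExactStructure C where
  enough_inj : ∀ X : C, ∃ (I : C) (i : X ⟶ I),
    toExactStructure.Inj I ∧ toExactStructure.IsInflation i
  enough_proj : ∀ X : C, ∃ (P : C) (p : P ⟶ X),
    toExactStructure.Proj P ∧ toExactStructure.IsDeflation p
  proj_iff_inj : ∀ X : C, toExactStructure.Proj X ↔ toExactStructure.Inj X

namespace FrobeniusStructure

variable {C}
variable (E : FrobeniusStructure C)

/-- morphisms factoring through a projective-injective object; these are the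
morphisms killed in the stable category. -/
def StablyTrivial {X Y : C} (f : X ⟶ Y) : Prop :=
  ∃ (I : C) (t : X ⟶ I) (s : I ⟶ Y), E.Inj I ∧ t ≫ s = f

/-- stable equivalences: morphisms becoming isomorphisms in the stable category F/I. -/
def IsStableEquiv {X Y : C} (f : X ⟶ Y) : Prop :=
  ∃ g : Y ⟶ X, E.StablyTrivial (𝟙 X - f ≫ g) ∧ E.StablyTrivial (𝟙 Y - g ≫ f)

end FrobeniusStructure

/-!
Since `W` is injective, the conflation `W ⟶ X ⟶ Y` splits, so `p` has a section `s`. The map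
`g ≫ s` already satisfies `(g ≫ s) ≫ p = g`; its failure `f - i ≫ g ≫ s` to extend `f` is killed
by `p`, hence factors through `k` via some `d : A ⟶ W`. Injectivity of `W` once more extends `d`
along the inflation `i` to `e : B ⟶ W`, and `g ≫ s + e ≫ k` is the required lift.
-/

namespace ExactStructure

omit [HasZeroObject C]

variable {C} (E : ExactStructure C) {W X Y : C} {k : W ⟶ X} {p : X ⟶ Y}

theorem exists_lift_of_comp_eq_zero (hp : E.IsConflation k p) {T : C} (u : T ⟶ X)
    (hu : u ≫ p = 0) : ∃ d : T ⟶ W, d ≫ k = u := by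
  obtain ⟨hlim⟩ := E.isKernel hp
  exact ⟨_, (KernelFork.IsLimit.lift' hlim u hu).2⟩

theorem exists_section_of_isConflation_of_inj (hp : E.IsConflation k p) (hW : E.Inj W) :
    ∃ s : Y ⟶ X, s ≫ p = 𝟙 Y := by
  have hkp : k ≫ p = 0 := E.comp_zero hp
  obtain ⟨r, hr⟩ := hW k ⟨Y, p, hp⟩ (𝟙 W)
  obtain ⟨hcolim⟩ := E.isCokernel hp
  obtain ⟨s, hs⟩ := CokernelCofork.IsColimit.desc' hcolim (𝟙 X - r ≫ k)
    (by simp [reassoc_of% hr])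
  refine ⟨s, Cofork.IsColimit.hom_ext hcolim ?_⟩
  simp only [CokernelCofork.π_ofπ] at hs ⊢
  simp [reassoc_of% hs, hkp]

end ExactStructure

/-- Cofibrations lift against trivial fibrations (deflations with injective kernel). -/
theorem cofibration_lift_trivialFibration
    (E : FrobeniusStructure C) {A B X Y W : C}
    (i : A ⟶ B) (hi : E.IsInflation i)
    (k : W ⟶ X) (p : X ⟶ Y) (hp : E.IsConflation k p) (hW : E.Inj W)
    (f : A ⟶ X) (g : B ⟶ Y) (sq : f ≫ p = i ≫ g) :
    ∃ h : B ⟶ X, i ≫ h = f ∧ h ≫ p = g := by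
  obtain ⟨s, hs⟩ := E.exists_section_of_isConflation_of_inj hp hW
  obtain ⟨d, hd⟩ := E.exists_lift_of_comp_eq_zero hp (f - i ≫ g ≫ s) (by simp [sq, hs])
  obtain ⟨e, he⟩ := hW i hi d
  refine ⟨g ≫ s + e ≫ k, ?_, ?_⟩
  · rw [Preadditive.comp_add, reassoc_of% he, hd]
    abel
  · simp [hs, E.comp_zero hp]
end

section
/- Let F be a Frobenius category. Given a commutative square with left edge an inflation i : A → B whose cokernel is injective, right edge a deflation p : X → Y, top edge f : A → X and bottom edge g : B → Y, there exists a lift h : B → X with h∘i = f and p∘h = g. -/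
open CategoryTheory CategoryTheory.Limits

universe v u

variable (C : Type u) [Category.{v} C] [Preadditive C] [HasZeroObject C] [HasBinaryBiproducts C]

/-!
Since `E` is Frobenius, the injective cokernel `Z` is also projective, so the conflation
`A ⟶ B ⟶ Z` splits: `B ≅ A ⊞ Z`. On the summand `A` the lift is forced to be `f`; on the
summand `Z` it is any lift of `Z ⟶ B ⟶ Y` through the deflation `p`, which exists again by
projectivity of `Z`.
-/

namespace CategoryTheory.ShortComplex.Splitting

variable {𝒞 : Type*} [Category 𝒞] [Preadditive 𝒞]

noncomputable def ofIsLimitOfSection {S : ShortComplex 𝒞}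
    (hS : IsLimit (KernelFork.ofι S.f S.zero)) (s : S.X₃ ⟶ S.X₂) (s_g : s ≫ S.g = 𝟙 S.X₃) :
    S.Splitting :=
  let r := KernelFork.IsLimit.lift' hS (𝟙 S.X₂ - S.g ≫ s) (by simp [s_g])
  have r_f : r.1 ≫ S.f = 𝟙 S.X₂ - S.g ≫ s := r.2
  { r := r.1
    s := s
    f_r := Fork.IsLimit.hom_ext hS (by simp [r_f])
    s_g := s_g
    id := by rw [r_f, sub_add_cancel] }

theorem exists_lift {S : ShortComplex 𝒞} (σ : S.Splitting) {X Y : 𝒞} {p : X ⟶ Y}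
    {f : S.X₁ ⟶ X} {g : S.X₂ ⟶ Y} (sq : f ≫ p = S.f ≫ g) {t : S.X₃ ⟶ X}
    (ht : t ≫ p = σ.s ≫ g) :
    ∃ h : S.X₂ ⟶ X, S.f ≫ h = f ∧ h ≫ p = g := by
  refine ⟨σ.r ≫ f + S.g ≫ t, by simp, ?_⟩
  calc (σ.r ≫ f + S.g ≫ t) ≫ p = (σ.r ≫ S.f + S.g ≫ σ.s) ≫ g := by
        simp only [Preadditive.add_comp, Category.assoc, sq, ht]
    _ = g := by rw [σ.id, Category.id_comp]

end CategoryTheory.ShortComplex.Splitting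

namespace ExactStructure

theorem exists_splitting_of_proj {C : Type u} [Category.{v} C] [Preadditive C]
    [HasZeroObject C] [HasBinaryBiproducts C] (E : ExactStructure C) {A B Z : C}
    {i : A ⟶ B} {c : B ⟶ Z} (hi : E.IsConflation i c) (hZ : E.Proj Z) :
    Nonempty (ShortComplex.mk i c (E.comp_zero hi)).Splitting := by
  obtain ⟨hK⟩ := E.isKernel hi
  obtain ⟨s, hs⟩ := hZ c ⟨A, i, hi⟩ (𝟙 Z)
  exact ⟨ShortComplex.Splitting.ofIsLimitOfSection hK s hs⟩

end ExactStructure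

/-- Trivial cofibrations (inflations with injective cokernel) lift against fibrations. -/
theorem trivialCofibration_lift_fibration
    (E : FrobeniusStructure C) {A B Z X Y : C}
    (i : A ⟶ B) (c : B ⟶ Z) (hi : E.IsConflation i c) (hZ : E.Inj Z)
    (p : X ⟶ Y) (hp : E.IsDeflation p)
    (f : A ⟶ X) (g : B ⟶ Y) (sq : f ≫ p = i ≫ g) :
    ∃ h : B ⟶ X, i ≫ h = f ∧ h ≫ p = g := by
  have hZ' : E.Proj Z := (E.proj_iff_inj Z).mpr hZ
  obtain ⟨σ⟩ := E.exists_splitting_of_proj hi hZ'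
  obtain ⟨t, ht⟩ := hZ' p hp (σ.s ≫ g)
  exact σ.exists_lift sq ht
end

section
/- In a Frobenius category F, every morphism f : X → Y factors as f = q ∘ j, where j is an inflation (a cofibration) and q is a deflation whose kernel is injective (a trivial fibration). -/
open CategoryTheory CategoryTheory.Limits

universe v u

variable (C : Type u) [Category.{v} C] [Preadditive C] [HasZeroObject C] [HasBinaryBiproducts C]

/-!
Take an inflation `i : X ⟶ I` into an injective object and factor `f` as
`biprod.lift f i : X ⟶ Y ⊞ I` followed by the split deflation `biprod.fst`, whose kernel is `I`.
The map `biprod.lift f i` is an inflation because it is the split inflation `biprod.inr`, twisted by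
the unipotent automorphism of `Y ⊞ X` with off-diagonal entry `f`, followed by `𝟙 Y ⊞ i`; the
latter is the pushout of `i` along `biprod.inr`.
-/

theorem CategoryTheory.Limits.IsPushout.biprod_inr_map_id {D : Type*} [Category D]
    [HasZeroMorphisms D] [HasZeroObject D] [HasBinaryBiproducts D] (Y : D) {X I : D}
    (i : X ⟶ I) : IsPushout biprod.inr i (biprod.map (𝟙 Y) i) biprod.inr :=
  IsPushout.of_top (by simp [IsPushout.of_has_biproduct Y I]) (by simp)
    (IsPushout.of_has_biproduct Y X)

theorem CategoryTheory.Limits.biprod.lift_eq_inr_comp_unipotentLower_comp_map {D : Type*}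
    [Category D] [Preadditive D] [HasBinaryBiproducts D] {X Y I : D} (f : X ⟶ Y) (i : X ⟶ I) :
    biprod.lift f i = biprod.inr ≫ (Biprod.unipotentLower f).hom ≫ biprod.map (𝟙 Y) i := by
  ext <;> simp [Biprod.ofComponents]

namespace ExactStructure

variable {D : Type*} [Category D] [Preadditive D] [HasBinaryBiproducts D] (E : ExactStructure D)

theorem isConflation_inr_fst (A B : D) :
    E.IsConflation (biprod.inr : A ⟶ B ⊞ A) (biprod.fst : B ⊞ A ⟶ B) :=
  E.iso_closed (Iso.refl A) (biprod.braiding A B) (Iso.refl B) _ _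
    (E.split_conflation A B) (by ext <;> simp) (by simp)

theorem isInflation_inr (A B : D) : E.IsInflation (biprod.inr : A ⟶ B ⊞ A) :=
  ⟨B, biprod.fst, E.isConflation_inr_fst A B⟩

variable {E}

theorem IsInflation.comp_iso_hom {X Y Y' : D} {i : X ⟶ Y} (hi : E.IsInflation i) (e : Y ≅ Y') :
    E.IsInflation (i ≫ e.hom) := by
  obtain ⟨Z, d, hd⟩ := hi
  exact ⟨Z, e.inv ≫ d, E.iso_closed (Iso.refl X) e (Iso.refl Z) _ _ hd (by simp) (by simp)⟩

theorem IsInflation.of_isPushout {X Y Z P : D} {i : X ⟶ Y} {f : X ⟶ Z} {i' : Z ⟶ P}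
    {f' : Y ⟶ P} (hi : E.IsInflation i) (h : IsPushout f i i' f') : E.IsInflation i' := by
  obtain ⟨W, j, g, hj, hW⟩ := E.infl_pushout hi f
  rw [← hW.inl_isoIsPushout_hom _ _ h]
  exact IsInflation.comp_iso_hom hj _

theorem IsInflation.biprod_map_id [HasZeroObject D] {X I : D} {i : X ⟶ I}
    (hi : E.IsInflation i) (Y : D) :
    E.IsInflation (biprod.map (𝟙 Y) i) :=
  hi.of_isPushout (IsPushout.biprod_inr_map_id Y i)

theorem IsInflation.biprod_lift [HasZeroObject D] {X Y I : D} {i : X ⟶ I}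
    (hi : E.IsInflation i) (f : X ⟶ Y) :
    E.IsInflation (biprod.lift f i) := by
  rw [biprod.lift_eq_inr_comp_unipotentLower_comp_map, ← Category.assoc]
  exact E.infl_comp ((E.isInflation_inr X Y).comp_iso_hom _) (hi.biprod_map_id Y)

end ExactStructure

/-- Every morphism factors as a cofibration followed by a trivial fibration. -/
theorem factor_cofibration_trivialFibration
    (E : FrobeniusStructure C) {X Y : C} (f : X ⟶ Y) :
    ∃ (Z : C) (j : X ⟶ Z) (q : Z ⟶ Y),
      E.IsInflation j ∧
      (∃ (W : C) (k : W ⟶ Z), E.IsConflation k q ∧ E.Inj W) ∧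
      j ≫ q = f := by
  obtain ⟨I, i, hI, hi⟩ := E.enough_inj X
  exact ⟨Y ⊞ I, biprod.lift f i, biprod.fst, hi.biprod_lift f,
    ⟨I, biprod.inr, E.isConflation_inr_fst I Y, hI⟩, biprod.lift_fst f i⟩
end

section
/- Let F be a Frobenius category, X an object, and Ω(X) ↣ P(X) ↠ X a conflation with P(X) projective-injective. Then X ⊕ P(X), with structure maps s = (1_X, 0) : X → X ⊕ P(X) and (p_0, p_1) : X ⊕ P(X) → X ⊕ X given by the matrix [[1_X, p_X],[1_X, 0]], is a path object for X: s is an inflation with injective cokernel, (p_0,p_1) is a deflation, and p_0 ∘ s = p_1 ∘ s = 1_X. -/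
open CategoryTheory CategoryTheory.Limits

universe v u

variable (C : Type u) [Category.{v} C] [Preadditive C] [HasZeroObject C] [HasBinaryBiproducts C]

/-!
The section `s = (1, 0)` is the split inflation `X ↣ X ⊞ P(X) ↠ P(X)`, whose cokernel `P(X)` is
injective. The matrix `[[1, p_X], [1, 0]]` factors as `𝟙 X ⊞ p_X` followed by the shear
automorphism `(a, b) ↦ (a + b, a)` of `X ⊞ X`; and `𝟙 X ⊞ p_X` is a deflation because it is the
base change of the deflation `p_X` along the projection `X ⊞ X ⟶ X`.
-/

@[simps]
noncomputable def biprod.shear {D : Type*} [Category D] [Preadditive D] (X : D)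
    [HasBinaryBiproduct X X] : X ⊞ X ≅ X ⊞ X where
  hom := biprod.lift (biprod.fst + biprod.snd) biprod.fst
  inv := biprod.lift biprod.snd (biprod.fst - biprod.snd)

theorem biprod.map_id_comp_shear_hom {D : Type*} [Category D] [Preadditive D]
    [HasBinaryBiproducts D] {X Y : D} (f : Y ⟶ X) :
    biprod.map (𝟙 X) f ≫ (biprod.shear X).hom =
      biprod.lift (biprod.desc (𝟙 X) f) (biprod.desc (𝟙 X) 0) := by
  ext <;> simp

open ZeroObject in
theorem isPullback_biprod_snd_map_id {D : Type*} [Category D] [HasZeroMorphisms D]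
    [HasZeroObject D] [HasBinaryBiproducts D] {X Y Z : D} (f : Y ⟶ Z) :
    IsPullback (biprod.snd : X ⊞ Y ⟶ Y) (biprod.map (𝟙 X) f) f biprod.snd := by
  refine IsPullback.of_bot (v₂₁ := biprod.fst) (v₂₂ := (0 : Z ⟶ 0)) ?_ (by simp)
    (IsPullback.of_has_biproduct X Z).flip
  simpa using (IsPullback.of_has_biproduct X Y).flip

namespace ExactStructure

variable {C} {E : ExactStructure C}

theorem IsDeflation.of_isPullback {X Y Z W : C} {p : X ⟶ Y} {f : Z ⟶ Y} {p' : W ⟶ Z}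
    {f' : W ⟶ X} (hp : E.IsDeflation p) (sq : IsPullback f' p' p f) : E.IsDeflation p' := by
  obtain ⟨W₀, p₀, f₀, ⟨V, k, hk⟩, sq₀⟩ := E.defl_pullback hp f
  let e := sq₀.isoIsPullback _ _ sq
  exact ⟨V, k ≫ e.hom, E.iso_closed (Iso.refl V) e (Iso.refl Z) _ _ hk (by simp) (by simp [e])⟩

theorem IsDeflation.comp_iso {X Y Z : C} {p : X ⟶ Y} (hp : E.IsDeflation p) (e : Y ≅ Z) :
    E.IsDeflation (p ≫ e.hom) := by
  obtain ⟨W, i, hi⟩ := hp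
  exact ⟨W, i, E.iso_closed (Iso.refl W) (Iso.refl X) e i _ hi (by simp) (by simp)⟩

end ExactStructure

/-- X ⊕ P(X) is a path object for X: the map (1,0) is a trivial cofibration,
the matrix [[1, p_X],[1, 0]] is a fibration, and both composites with the
section are the identity. -/
theorem pathObject_biprod
    (E : FrobeniusStructure C) {ΩX PX X : C}
    (ι : ΩX ⟶ PX) (pX : PX ⟶ X) (h : E.IsConflation ι pX)
    (hPX : E.Proj PX ∧ E.Inj PX) :
    (∃ (W : C) (d : X ⊞ PX ⟶ W),
        E.IsConflation (biprod.lift (𝟙 X) (0 : X ⟶ PX)) d ∧ E.Inj W) ∧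
    E.IsDeflation (biprod.lift (biprod.desc (𝟙 X) pX) (biprod.desc (𝟙 X) 0) :
        X ⊞ PX ⟶ X ⊞ X) ∧
    biprod.lift (𝟙 X) (0 : X ⟶ PX) ≫ biprod.desc (𝟙 X) pX = 𝟙 X ∧
    biprod.lift (𝟙 X) (0 : X ⟶ PX) ≫ biprod.desc (𝟙 X) (0 : PX ⟶ X) = 𝟙 X := by
  have hs : biprod.lift (𝟙 X) (0 : X ⟶ PX) = biprod.inl := by simp [biprod.lift_eq]
  have hpX : E.IsDeflation pX := ⟨ΩX, ι, h⟩
  have hmap : E.IsDeflation (biprod.map (𝟙 X) pX) :=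
    hpX.of_isPullback (isPullback_biprod_snd_map_id pX)
  refine ⟨⟨PX, biprod.snd, hs ▸ E.split_conflation X PX, hPX.2⟩, ?_, by simp, by simp⟩
  simpa only [biprod.map_id_comp_shear_hom] using hmap.comp_iso (biprod.shear X)
end

section
/- Let F be a Frobenius category and X, Y objects, with path object X ⊕ P(Y) for Y as above. Two morphisms f, g : X → Y are right homotopic with respect to this path object (i.e., there exists H : X → Y ⊕ P(Y) with p_0∘H = f and p_1∘H = g) if and only if f − g factors through a projective-injective object. -/
open CategoryTheory CategoryTheory.Limits

universe v u

variable (C : Type u) [Category.{v} C] [Preadditive C] [HasZeroObject C] [HasBinaryBiproducts C]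

/-! The homotopy `H` is determined by its two components: `H ≫ biprod.fst` is `g`, and
`H ≫ biprod.snd` is a map into the projective-injective `P(Y)` lifting `f - g` along `p_Y`.
Such a lift exists exactly when `f - g` factors through a projective-injective, because
projective-injectives are projective relative to the deflation `p_Y`. -/

section

variable {C}

omit [HasZeroObject C] in
lemma CategoryTheory.Limits.biprod.desc_sub_desc {X Y Z : C} (a : X ⟶ Z) (b c : Y ⟶ Z) :
    biprod.desc a b - biprod.desc a c = biprod.snd ≫ (b - c) := by
  apply biprod.hom_ext' <;> simp

omit [HasZeroObject C] in
lemma FrobeniusStructure.StablyTrivial.exists_lift_of_isDeflation {E : FrobeniusStructure C}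
    {X Y Z : C} {f : X ⟶ Y} (hf : E.StablyTrivial f) {d : Z ⟶ Y} (hd : E.IsDeflation d) :
    ∃ u : X ⟶ Z, u ≫ d = f := by
  obtain ⟨I, t, s, hI, rfl⟩ := hf
  obtain ⟨v, hv⟩ := (E.proj_iff_inj I).mpr hI d hd s
  exact ⟨t ≫ v, by rw [Category.assoc, hv]⟩

end

/-- Right homotopy with respect to the path object Y ⊕ P(Y) coincides with
stable equivalence of morphisms. -/
theorem rightHomotopic_iff_stablyEquivalent
    (E : FrobeniusStructure C) {ΩY PY Y X : C}
    (ι : ΩY ⟶ PY) (pY : PY ⟶ Y) (h : E.IsConflation ι pY)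
    (hPY : E.Proj PY ∧ E.Inj PY) (f g : X ⟶ Y) :
    (∃ H : X ⟶ Y ⊞ PY,
        H ≫ biprod.desc (𝟙 Y) pY = f ∧ H ≫ biprod.desc (𝟙 Y) (0 : PY ⟶ Y) = g) ↔
    E.StablyTrivial (f - g) := by
  constructor
  · rintro ⟨H, rfl, rfl⟩
    refine ⟨PY, H ≫ biprod.snd, pY, hPY.2, ?_⟩
    rw [← Preadditive.comp_sub, biprod.desc_sub_desc, sub_zero, Category.assoc]
  · intro hfg
    obtain ⟨u, hu⟩ := hfg.exists_lift_of_isDeflation ⟨ΩY, ι, h⟩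
    refine ⟨biprod.lift g u, ?_, by simp⟩
    rw [biprod.lift_desc, Category.comp_id, hu, add_sub_cancel]
end

section
/- In a Frobenius category F, if i : X → Y is an inflation admitting a stable inverse j : Y → X (so 1_X − j∘i factors through an injective object I via t : X → I and s : I → X), then the morphism (i, t)ᵀ : X → Y ⊕ I is a split inflation, and its cokernel J is an injective object. -/
open CategoryTheory CategoryTheory.Limits

universe v u

variable (C : Type u) [Category.{v} C] [Preadditive C] [HasZeroObject C] [HasBinaryBiproducts C]

/-!
Extend `t` along the inflation `i` to `u : Y ⟶ I`. Then `(i, t)ᵀ` is the inflation `i ≫ inl`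
followed by the shear automorphism of `Y ⊞ I` defined by `u`, hence a conflation with some
deflation `d : Y ⊞ I ⟶ J`; the retraction `(j, s)` splits it, so `𝟙 J = σ ≫ d` for a section `σ`.

Let `g` kill `(i, t)ᵀ`, with restrictions `g₁` to `Y` and `g₂` to `I`. Then `g₂` factors through
`I`, hence so does `i ≫ g₁ = -(t ≫ g₂)`, and then `g₁ = (1 - j ≫ i) ≫ g₁ + j ≫ i ≫ g₁` and
`g` factor through injectives. Applied to `d`, this makes `𝟙 J` factor through an injective, so `J` is a
retract of an injective.
-/

lemma CategoryTheory.Limits.CokernelCofork.IsColimit.exists_section_of_retraction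
    {D : Type*} [Category D] [Preadditive D] {X Y Z : D} {f : X ⟶ Y} {d : Y ⟶ Z}
    (w : f ≫ d = 0) (hd : IsColimit (CokernelCofork.ofπ d w)) (r : Y ⟶ X) (hr : f ≫ r = 𝟙 X) :
    ∃ σ : Z ⟶ Y, σ ≫ d = 𝟙 Z := by
  obtain ⟨σ, hσ⟩ := CokernelCofork.IsColimit.desc' hd (𝟙 Y - r ≫ f)
    (by simp [reassoc_of% hr])
  refine ⟨σ, Cofork.IsColimit.hom_ext hd ?_⟩
  simp only [Cofork.π_ofπ] at hσ ⊢
  simp [reassoc_of% hσ, w]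

section

variable {C}

omit [HasZeroObject C]

namespace ExactStructure

variable (E : ExactStructure C)

lemma isInflation_inl (Y I : C) : E.IsInflation (biprod.inl : Y ⟶ Y ⊞ I) :=
  ⟨I, biprod.snd, E.split_conflation Y I⟩

lemma isConflation_comp_iso {X Y Y' Z : C} {f : X ⟶ Y} {d : Y ⟶ Z} (h : E.IsConflation f d)
    (e : Y ≅ Y') : E.IsConflation (f ≫ e.hom) (e.inv ≫ d) :=
  E.iso_closed (Iso.refl X) e (Iso.refl Z) _ _ h (by simp) (by simp)

variable {E}

lemma Inj.of_retract {I J : C} (hI : E.Inj I) (u : J ⟶ I) (v : I ⟶ J) (huv : u ≫ v = 𝟙 J) :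
    E.Inj J := by
  intro A B a ha f
  obtain ⟨g, hg⟩ := hI a ha (f ≫ u)
  exact ⟨g ≫ v, by simp [reassoc_of% hg, huv]⟩

lemma Inj.biprod {I I' : C} (hI : E.Inj I) (hI' : E.Inj I') : E.Inj (I ⊞ I') := by
  intro A B a ha f
  obtain ⟨g, hg⟩ := hI a ha (f ≫ biprod.fst)
  obtain ⟨g', hg'⟩ := hI' a ha (f ≫ biprod.snd)
  exact ⟨biprod.lift g g', by ext <;> simp [hg, hg']⟩

end ExactStructure

namespace FrobeniusStructure

variable {E : FrobeniusStructure C}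

lemma stablyTrivial_of_inj {I Y : C} (hI : E.Inj I) (f : I ⟶ Y) : E.StablyTrivial f :=
  ⟨I, 𝟙 I, f, hI, Category.id_comp f⟩

lemma StablyTrivial.comp_left {X Y Z : C} {g : Y ⟶ Z} (hg : E.StablyTrivial g) (f : X ⟶ Y) :
    E.StablyTrivial (f ≫ g) := by
  obtain ⟨I, t, s, hI, rfl⟩ := hg
  exact ⟨I, f ≫ t, s, hI, by simp⟩

lemma StablyTrivial.comp_right {X Y Z : C} {f : X ⟶ Y} (hf : E.StablyTrivial f) (g : Y ⟶ Z) :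
    E.StablyTrivial (f ≫ g) := by
  obtain ⟨I, t, s, hI, rfl⟩ := hf
  exact ⟨I, t, s ≫ g, hI, by simp⟩

lemma StablyTrivial.add {X Y : C} {f g : X ⟶ Y} (hf : E.StablyTrivial f)
    (hg : E.StablyTrivial g) : E.StablyTrivial (f + g) := by
  obtain ⟨I, t, s, hI, rfl⟩ := hf
  obtain ⟨I', t', s', hI', rfl⟩ := hg
  exact ⟨I ⊞ I', biprod.lift t t', biprod.desc s s', hI.biprod hI', by simp⟩

lemma inj_of_stablyTrivial_id {J : C} (h : E.StablyTrivial (𝟙 J)) : E.Inj J := by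
  obtain ⟨I, t, s, hI, hts⟩ := h
  exact hI.of_retract t s hts

/-- A morphism `i` with a stable section `j` is an epimorphism in the stable category. -/
lemma StablyTrivial.of_comp {X Y Z : C} {i : X ⟶ Y} {j : Y ⟶ X} {g : Y ⟶ Z}
    (hji : E.StablyTrivial (𝟙 Y - j ≫ i)) (hg : E.StablyTrivial (i ≫ g)) :
    E.StablyTrivial g := by
  have hsplit : g = (𝟙 Y - j ≫ i) ≫ g + j ≫ i ≫ g := by simp
  rw [hsplit]
  exact (hji.comp_right g).add (hg.comp_left j)

lemma stablyTrivial_of_lift_comp_eq_zero {X Y I W : C} {i : X ⟶ Y} {j : Y ⟶ X}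
    (hji : E.StablyTrivial (𝟙 Y - j ≫ i)) (hI : E.Inj I) {t : X ⟶ I} {g : Y ⊞ I ⟶ W}
    (hg : biprod.lift i t ≫ g = 0) : E.StablyTrivial g := by
  have hinr : E.StablyTrivial (biprod.inr ≫ g) := stablyTrivial_of_inj hI _
  have hinl : E.StablyTrivial (biprod.inl ≫ g) := by
    refine hji.of_comp ?_
    have hi : i ≫ biprod.inl ≫ g = t ≫ (-(biprod.inr ≫ g)) := by
      rw [← sub_eq_zero, ← hg, biprod.lift_eq]
      simp
    rw [hi]
    exact (stablyTrivial_of_inj hI _).comp_left t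
  rw [← Category.id_comp g, ← biprod.total, Preadditive.add_comp, Category.assoc,
    Category.assoc]
  exact (hinl.comp_left _).add (hinr.comp_left _)

end FrobeniusStructure

end

/-- If an inflation i has a stable inverse j, with 1 - j∘i = s∘t through an
injective I, then (i,t)ᵀ : X → Y ⊕ I is a split inflation with injective cokernel. -/
theorem split_inflation_injective_cokernel
    (E : FrobeniusStructure C) {X Y I : C}
    (i : X ⟶ Y) (hi : E.IsInflation i) (j : Y ⟶ X)
    (hI : E.Inj I) (t : X ⟶ I) (s : I ⟶ X)
    (hts : 𝟙 X - i ≫ j = t ≫ s)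
    (hj : E.StablyTrivial (𝟙 Y - j ≫ i)) :
    (∃ r : Y ⊞ I ⟶ X, biprod.lift i t ≫ r = 𝟙 X) ∧
    (∃ (J : C) (d : Y ⊞ I ⟶ J), E.IsConflation (biprod.lift i t) d ∧ E.Inj J) := by
  have hr : biprod.lift i t ≫ biprod.desc j s = 𝟙 X := by simp [← hts]
  refine ⟨⟨_, hr⟩, ?_⟩
  obtain ⟨u, hu⟩ := hI i hi t
  obtain ⟨J, d, hd⟩ := E.infl_comp hi (E.isInflation_inl Y I)
  have hconf := E.isConflation_comp_iso hd (Biprod.unipotentUpper u)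
  rw [show (i ≫ biprod.inl) ≫ (Biprod.unipotentUpper u).hom = biprod.lift i t by
    ext <;> simp [hu]] at hconf
  obtain ⟨hcoker⟩ := E.isCokernel hconf
  obtain ⟨σ, hσ⟩ := CokernelCofork.IsColimit.exists_section_of_retraction _ hcoker _ hr
  refine ⟨J, _, hconf, FrobeniusStructure.inj_of_stablyTrivial_id ?_⟩
  rw [← hσ]
  exact (FrobeniusStructure.stablyTrivial_of_lift_comp_eq_zero hj hI
    (E.comp_zero hconf)).comp_left σ
end
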